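/- arXiv:2012.06751 — 6 statements merged into one kernel-verified Lean document; each statement's English description precedes it below -/
import Mathlib

section
/- Every monetary risk measure ρ on L^∞(P) is the pointwise minimum of a family of convex risk measures: for each X ∈ L^∞(P), ρ(X) = min_{Z ∈ 𝒜_ρ} esssup(Z − X), where the minimum is attained at Z = X + ρ(X). -/
open MeasureTheory ProbabilityTheory Filter Set

/-- `X` belongs to `L^∞(P)`: measurable and essentially bounded. -/
def MemLinf {Ω : Type*} [MeasurableSpace Ω] (P : Measure Ω) (X : Ω → ℝ) : Prop :=
  Measurable X ∧ ∃ C : ℝ, ∀ᵐ ω ∂P, |X ω| ≤ C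

/-- A monetary risk measure `ρ` is the pointwise minimum over `Z ∈ 𝒜_ρ` of the convex risk
measures `X ↦ esssup (Z − X)`: each such value dominates `ρ(X)`, and the minimum is attained
at `Z = X + ρ(X)`. -/
theorem stmt6 {Ω : Type*} [MeasurableSpace Ω] (P : Measure Ω) [IsProbabilityMeasure P]
    (ρ : (Ω → ℝ) → ℝ)
    (hmono : ∀ X Y : Ω → ℝ, MemLinf P X → MemLinf P Y →
      (∀ᵐ ω ∂P, X ω ≤ Y ω) → ρ Y ≤ ρ X)
    (hTI : ∀ X : Ω → ℝ, MemLinf P X → ∀ m : ℝ, ρ (fun ω => X ω + m) = ρ X - m)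
    (X : Ω → ℝ) (hX : MemLinf P X) :
    MemLinf P (fun ω => X ω + ρ X)
    ∧ ρ (fun ω => X ω + ρ X) ≤ 0
    ∧ essSup (fun ω => (X ω + ρ X) - X ω) P = ρ X
    ∧ ∀ Z : Ω → ℝ, MemLinf P Z → ρ Z ≤ 0 →
        ρ X ≤ essSup (fun ω => Z ω - X ω) P := by
  obtain ⟨hXm, C, hC⟩ := hX
  have hX' : MemLinf P X := ⟨hXm, C, hC⟩
  have hshift : ∀ m : ℝ, MemLinf P (fun ω => X ω + m) := by
    intro m
    refine ⟨hXm.add measurable_const, C + |m|, ?_⟩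
    filter_upwards [hC] with ω hω
    calc |X ω + m| ≤ |X ω| + |m| := abs_add_le _ _
      _ ≤ C + |m| := by linarith
  refine ⟨hshift (ρ X), ?_, ?_, ?_⟩
  · rw [hTI X hX' (ρ X)]; simp
  · have : (fun ω => (X ω + ρ X) - X ω) = fun _ => ρ X := by
      funext ω; ring
    rw [this, essSup_const _ (NeZero.ne P)]
  · intro Z hZ hZ0
    obtain ⟨hZm, D, hD⟩ := hZ
    set s := essSup (fun ω => Z ω - X ω) P with hs
    have hbdd : IsBoundedUnder (· ≤ ·) (ae P) (fun ω => Z ω - X ω) := by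
      refine ⟨D + C, eventually_map.2 ?_⟩
      filter_upwards [hC, hD] with ω h1 h2
      linarith [(abs_le.mp h1).1, (abs_le.mp h2).2]
    have hle : ∀ᵐ ω ∂P, Z ω - X ω ≤ s := ae_le_essSup hbdd
    have hle' : ∀ᵐ ω ∂P, Z ω ≤ X ω + s := by
      filter_upwards [hle] with ω h; linarith
    have := hmono Z (fun ω => X ω + s) ⟨hZm, D, hD⟩ (hshift s) hle'
    rw [hTI X hX' s] at this
    linarith
end

section
/- A map ρ: L^∞(P) → ℝ is a monetary risk measure if and only if ρ(X) = inf{h(X) : h is a convex risk measure on L^∞(P) with h ≥ ρ pointwise} for every X ∈ L^∞(P). -/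
open MeasureTheory ProbabilityTheory Filter Set

/-- `h` is a monetary risk measure on `L^∞(P)`: monotone and translation-invariant. -/
def IsMonetaryRM {Ω : Type*} [MeasurableSpace Ω] (P : Measure Ω)
    (h : (Ω → ℝ) → ℝ) : Prop :=
  (∀ X Y : Ω → ℝ, MemLinf P X → MemLinf P Y → (∀ᵐ ω ∂P, X ω ≤ Y ω) → h Y ≤ h X) ∧
  (∀ X : Ω → ℝ, MemLinf P X → ∀ m : ℝ, h (fun ω => X ω + m) = h X - m)

/-- `h` is a convex risk measure on `L^∞(P)`. -/
def IsConvexRM {Ω : Type*} [MeasurableSpace Ω] (P : Measure Ω)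
    (h : (Ω → ℝ) → ℝ) : Prop :=
  IsMonetaryRM P h ∧
  (∀ X Y : Ω → ℝ, MemLinf P X → MemLinf P Y → ∀ α : ℝ, 0 ≤ α → α ≤ 1 →
    h (fun ω => α * X ω + (1 - α) * Y ω) ≤ α * h X + (1 - α) * h Y)

lemma memLinf_add_const {Ω : Type*} [MeasurableSpace Ω] {P : Measure Ω} {X : Ω → ℝ}
    (hX : MemLinf P X) (m : ℝ) : MemLinf P (fun ω => X ω + m) := by
  obtain ⟨hm, C, hC⟩ := hX
  refine ⟨hm.add_const m, C + |m|, ?_⟩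
  filter_upwards [hC] with ω h
  calc |X ω + m| ≤ |X ω| + |m| := abs_add_le _ _
    _ ≤ C + |m| := by linarith

lemma memLinf_combo {Ω : Type*} [MeasurableSpace Ω] {P : Measure Ω} {X Y : Ω → ℝ}
    (hX : MemLinf P X) (hY : MemLinf P Y) {α : ℝ} (h0 : 0 ≤ α) (h1 : α ≤ 1) :
    MemLinf P (fun ω => α * X ω + (1 - α) * Y ω) := by
  obtain ⟨hmX, C1, hC1⟩ := hX
  obtain ⟨hmY, C2, hC2⟩ := hY
  refine ⟨(measurable_const.mul hmX).add (measurable_const.mul hmY), max C1 C2, ?_⟩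
  filter_upwards [hC1, hC2] with ω g1 g2
  have hC1' : (0:ℝ) ≤ C1 := le_trans (abs_nonneg _) g1
  have hC2' : (0:ℝ) ≤ C2 := le_trans (abs_nonneg _) g2
  calc |α * X ω + (1 - α) * Y ω| ≤ |α * X ω| + |(1 - α) * Y ω| := abs_add_le _ _
    _ = α * |X ω| + (1 - α) * |Y ω| := by
        rw [abs_mul, abs_mul, abs_of_nonneg h0, abs_of_nonneg (show (0:ℝ) ≤ 1 - α by linarith)]
    _ ≤ α * C1 + (1 - α) * C2 := by
        have := abs_nonneg (X ω); have := abs_nonneg (Y ω); nlinarith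
    _ ≤ max C1 C2 := by
        nlinarith [le_max_left C1 C2, le_max_right C1 C2]

/-- `ρ` is a monetary risk measure if and only if, for every `X ∈ L^∞(P)`, `ρ(X)` is the
infimum of `h(X)` over all convex risk measures `h` dominating `ρ` on `L^∞(P)`. -/
theorem stmt7 {Ω : Type*} [MeasurableSpace Ω] (P : Measure Ω) [IsProbabilityMeasure P]
    (ρ : (Ω → ℝ) → ℝ) :
    IsMonetaryRM P ρ ↔
      ∀ X : Ω → ℝ, MemLinf P X →
        IsGLB {r : ℝ | ∃ h : (Ω → ℝ) → ℝ, IsConvexRM P h ∧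
          (∀ Y : Ω → ℝ, MemLinf P Y → ρ Y ≤ h Y) ∧ r = h X} (ρ X) := by
  have hPae : (MeasureTheory.ae P).NeBot := ae_neBot.mpr (IsProbabilityMeasure.ne_zero P)
  constructor
  · rintro ⟨hmono, htrans⟩ X hX
    classical
    set e : (Ω → ℝ) → ℝ := fun Y => sInf {m : ℝ | ∀ᵐ ω ∂P, X ω - Y ω ≤ m} with he
    obtain ⟨CX, hCX⟩ := hX.2
    have hne : ∀ Y : Ω → ℝ, MemLinf P Y →
        ({m : ℝ | ∀ᵐ ω ∂P, X ω - Y ω ≤ m}).Nonempty := by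
      rintro Y ⟨-, CY, hCY⟩
      refine ⟨CX + CY, ?_⟩
      simp only [Set.mem_setOf_eq]
      filter_upwards [hCX, hCY] with ω h1 h2
      have := abs_le.mp h1
      have := abs_le.mp h2
      linarith [this.1, this.2]
    have hbdd : ∀ Y : Ω → ℝ, MemLinf P Y →
        BddBelow {m : ℝ | ∀ᵐ ω ∂P, X ω - Y ω ≤ m} := by
      rintro Y ⟨-, CY, hCY⟩
      refine ⟨-(CX + CY), fun m hm => ?_⟩
      simp only [Set.mem_setOf_eq] at hm
      obtain ⟨ω, h1, h2, h3⟩ := (hm.and (hCX.and hCY)).exists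
      have a1 := abs_le.mp h2
      have a2 := abs_le.mp h3
      linarith [a1.1, a1.2, a2.1, a2.2]
    have hkey : ∀ Y : Ω → ℝ, MemLinf P Y → ∀ᵐ ω ∂P, X ω - Y ω ≤ e Y := by
      intro Y hY
      have h1 : ∀ n : ℕ, ∀ᵐ ω ∂P, X ω - Y ω ≤ e Y + 1 / (n + 1) := by
        intro n
        have hlt : e Y < e Y + 1 / (n + 1) := lt_add_of_pos_right _ (by positivity)
        obtain ⟨m, hm, hmlt⟩ := exists_lt_of_csInf_lt (hne Y hY) hlt
        simp only [Set.mem_setOf_eq] at hm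
        exact hm.mono fun ω h => h.trans hmlt.le
      filter_upwards [ae_all_iff.mpr h1] with ω hω
      refine le_of_forall_pos_le_add fun ε hε => ?_
      obtain ⟨n, hn⟩ := exists_nat_one_div_lt hε
      exact (hω n).trans (by linarith)
    have heX : e X = 0 := by
      apply le_antisymm
      · refine csInf_le (hbdd X hX) ?_
        simp only [Set.mem_setOf_eq]
        exact ae_of_all _ fun ω => by simp
      · refine le_csInf (hne X hX) fun m hm => ?_
        simp only [Set.mem_setOf_eq] at hm
        obtain ⟨ω, hω⟩ := hm.exists
        linarith
    set h : (Ω → ℝ) → ℝ := fun Y => ρ X + e Y with hh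
    have hdom : ∀ Y : Ω → ℝ, MemLinf P Y → ρ Y ≤ h Y := by
      intro Y hY
      have h1 : ∀ᵐ ω ∂P, X ω ≤ Y ω + e Y := by
        filter_upwards [hkey Y hY] with ω hω; linarith
      have h2 := hmono X (fun ω => Y ω + e Y) hX (memLinf_add_const hY _) h1
      rw [htrans Y hY (e Y)] at h2
      show ρ Y ≤ ρ X + e Y
      linarith
    have hmono' : ∀ Y Z : Ω → ℝ, MemLinf P Y → MemLinf P Z →
        (∀ᵐ ω ∂P, Y ω ≤ Z ω) → h Z ≤ h Y := by
      intro Y Z hY hZ hle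
      have : e Z ≤ e Y := by
        refine csInf_le_csInf (hbdd Z hZ) (hne Y hY) fun m hm => ?_
        simp only [Set.mem_setOf_eq] at hm ⊢
        filter_upwards [hm, hle] with ω g1 g2; linarith
      show ρ X + e Z ≤ ρ X + e Y
      linarith
    have htrans' : ∀ Y : Ω → ℝ, MemLinf P Y → ∀ m : ℝ,
        h (fun ω => Y ω + m) = h Y - m := by
      intro Y hY m
      have hYm := memLinf_add_const hY m
      have h1 : e (fun ω => Y ω + m) ≤ e Y - m := by
        refine csInf_le (hbdd _ hYm) ?_
        simp only [Set.mem_setOf_eq]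
        filter_upwards [hkey Y hY] with ω hω
        show X ω - (Y ω + m) ≤ e Y - m
        linarith
      have h2 : e Y ≤ e (fun ω => Y ω + m) + m := by
        refine csInf_le (hbdd Y hY) ?_
        simp only [Set.mem_setOf_eq]
        filter_upwards [hkey _ hYm] with ω hω
        have hω' : X ω - (Y ω + m) ≤ e (fun ω => Y ω + m) := hω
        linarith
      show ρ X + e (fun ω => Y ω + m) = ρ X + e Y - m
      linarith
    have hconv : ∀ Y Z : Ω → ℝ, MemLinf P Y → MemLinf P Z → ∀ α : ℝ, 0 ≤ α → α ≤ 1 →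
        h (fun ω => α * Y ω + (1 - α) * Z ω) ≤ α * h Y + (1 - α) * h Z := by
      intro Y Z hY hZ α h0 h1
      have hcombo := memLinf_combo hY hZ h0 h1
      have he1 : e (fun ω => α * Y ω + (1 - α) * Z ω) ≤ α * e Y + (1 - α) * e Z := by
        refine csInf_le (hbdd _ hcombo) ?_
        simp only [Set.mem_setOf_eq]
        filter_upwards [hkey Y hY, hkey Z hZ] with ω g1 g2
        have t1 : α * (X ω - Y ω) ≤ α * e Y := mul_le_mul_of_nonneg_left g1 h0
        have t2 : (1 - α) * (X ω - Z ω) ≤ (1 - α) * e Z :=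
          mul_le_mul_of_nonneg_left g2 (by linarith)
        show X ω - (α * Y ω + (1 - α) * Z ω) ≤ α * e Y + (1 - α) * e Z
        nlinarith
      show ρ X + e (fun ω => α * Y ω + (1 - α) * Z ω) ≤
        α * (ρ X + e Y) + (1 - α) * (ρ X + e Z)
      nlinarith [he1]
    have hhX : h X = ρ X := by
      show ρ X + e X = ρ X
      rw [heX, add_zero]
    have hmem : ρ X ∈ {r : ℝ | ∃ h : (Ω → ℝ) → ℝ, IsConvexRM P h ∧
        (∀ Y : Ω → ℝ, MemLinf P Y → ρ Y ≤ h Y) ∧ r = h X} :=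
      ⟨h, ⟨⟨hmono', htrans'⟩, hconv⟩, hdom, hhX.symm⟩
    constructor
    · rintro r ⟨g, hg, hgdom, rfl⟩
      exact hgdom X hX
    · intro b hb
      exact hb hmem
  · intro hGLB
    constructor
    · intro X Y hX hY hle
      refine (hGLB X hX).2 ?_
      rintro r ⟨g, hg, hgdom, rfl⟩
      exact (hgdom Y hY).trans (hg.1.1 X Y hX hY hle)
    · intro X hX m
      have hXm := memLinf_add_const hX m
      have G1 := hGLB X hX
      have G2 := hGLB (fun ω => X ω + m) hXm
      refine G2.unique ?_
      constructor
      · rintro r ⟨g, hg, hgdom, rfl⟩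
        have h1 : ρ X ≤ g X := G1.1 ⟨g, hg, hgdom, rfl⟩
        rw [hg.1.2 X hX m]
        linarith
      · intro b hb
        have : b + m ≤ ρ X := by
          refine G1.2 ?_
          rintro r ⟨g, hg, hgdom, rfl⟩
          have : b ≤ g X - m := by
            have := hb ⟨g, hg, hgdom, (hg.1.2 X hX m).symm⟩
            linarith [hg.1.2 X hX m, this]
          linarith
        linarith
end

section
/- Every monetary risk measure ρ on L^∞(P) admits the representation ρ(X) = min over Z ∈ 𝒜_ρ of sup over Q ∈ 𝓜₁(P) of (E_Q[−X] − E_Q[−Z]), for all X ∈ L^∞(P). -/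
/-!
For essentially bounded `f`, the supremum of `E_Q[f]` over `Q ∈ 𝓜₁(P)` dominates `f` almost surely
(conditioning `P` on `{f > m}` would otherwise give a larger expectation), and it equals `c` for a
constant `c`. Taking `Z = X + ρ(X) ∈ 𝒜_ρ` attains the value `ρ(X)`; for any `Z ∈ 𝒜_ρ`, with `m` the
supremum for `Z − X`, we have `Z − m ≤ X`, so `ρ(X) ≤ ρ(Z − m) = ρ(Z) + m ≤ m`.
-/

open MeasureTheory ProbabilityTheory Filter Set

section

variable {Ω : Type*} [MeasurableSpace Ω] {P : Measure Ω}

namespace MemLinf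

variable {X Y : Ω → ℝ}

lemma integrable_of_absolutelyContinuous (hX : MemLinf P X) {Q : Measure Ω} [IsFiniteMeasure Q]
    (hQP : Q ≪ P) : Integrable X Q := by
  obtain ⟨hXm, C, hC⟩ := hX
  exact Integrable.mono' (integrable_const C) hXm.aestronglyMeasurable (hQP.ae_le hC)

lemma add_const (hX : MemLinf P X) (c : ℝ) : MemLinf P (fun ω => X ω + c) := by
  obtain ⟨hXm, C, hC⟩ := hX
  refine ⟨hXm.add_const c, C + |c|, ?_⟩
  filter_upwards [hC] with ω hω
  exact (abs_add_le _ _).trans (by linarith)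

lemma sub (hX : MemLinf P X) (hY : MemLinf P Y) : MemLinf P (fun ω => X ω - Y ω) := by
  obtain ⟨hXm, C, hC⟩ := hX
  obtain ⟨hYm, D, hD⟩ := hY
  refine ⟨hXm.sub hYm, C + D, ?_⟩
  filter_upwards [hC, hD] with ω hω₁ hω₂
  exact (abs_sub _ _).trans (by linarith)

end MemLinf

/-- The expectations `E_Q[f]` over all `Q ∈ 𝓜₁(P)`. -/
def acExpectations (P : Measure Ω) (f : Ω → ℝ) : Set ℝ :=
  {s | ∃ Q : Measure Ω, IsProbabilityMeasure Q ∧ Q ≪ P ∧ s = ∫ ω, f ω ∂Q}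

lemma acExpectations_const [IsProbabilityMeasure P] (c : ℝ) :
    acExpectations P (fun _ => c) = {c} := by
  ext s
  constructor
  · rintro ⟨Q, hQ, -, rfl⟩
    simp
  · rintro rfl
    exact ⟨P, inferInstance, .rfl, by simp⟩

lemma bddAbove_acExpectations {f : Ω → ℝ} (hf : MemLinf P f) : BddAbove (acExpectations P f) := by
  obtain ⟨C, hC⟩ := hf.2
  refine ⟨C, ?_⟩
  rintro s ⟨Q, hQ, hQP, rfl⟩
  calc ∫ ω, f ω ∂Q ≤ ∫ _, C ∂Q :=
        integral_mono_ae (hf.integrable_of_absolutelyContinuous hQP) (integrable_const C)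
          (by filter_upwards [hQP.ae_le hC] with ω hω using le_of_abs_le hω)
    _ = C := by simp

theorem ae_le_of_forall_integral_le [IsFiniteMeasure P] {f : Ω → ℝ} (hf : Integrable f P) {m : ℝ}
    (h : ∀ Q : Measure Ω, IsProbabilityMeasure Q → Q ≪ P → ∫ ω, f ω ∂Q ≤ m) :
    ∀ᵐ ω ∂P, f ω ≤ m := by
  refine ae_le_of_forall_setIntegral_le hf (integrable_const m) fun s hs _ => ?_
  rcases eq_or_ne (P s) 0 with hPs | hPs
  · simp [Measure.restrict_eq_zero.2 hPs]
  have hcond := h P[|s] (cond_isProbabilityMeasure hPs) cond_absolutelyContinuous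
  have hPs_pos : 0 < P.real s := ENNReal.toReal_pos hPs (measure_ne_top P s)
  rw [ProbabilityTheory.cond, integral_smul_measure, ENNReal.toReal_inv, smul_eq_mul] at hcond
  rw [setIntegral_const, smul_eq_mul]
  exact (inv_mul_le_iff₀ hPs_pos).1 hcond

lemma ae_le_sSup_acExpectations [IsFiniteMeasure P] {f : Ω → ℝ} (hf : MemLinf P f) :
    ∀ᵐ ω ∂P, f ω ≤ sSup (acExpectations P f) :=
  ae_le_of_forall_integral_le (hf.integrable_of_absolutelyContinuous .rfl) fun Q hQ hQP =>
    le_csSup (bddAbove_acExpectations hf) ⟨Q, hQ, hQP, rfl⟩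

lemma setOf_integral_neg_sub_integral_neg_eq {X Z : Ω → ℝ} (hX : MemLinf P X) (hZ : MemLinf P Z) :
    {s : ℝ | ∃ Q : Measure Ω, IsProbabilityMeasure Q ∧ Q ≪ P ∧
      s = (∫ ω, -X ω ∂Q) - ∫ ω, -Z ω ∂Q} = acExpectations P (fun ω => Z ω - X ω) := by
  refine Set.ext fun s => exists_congr fun Q => and_congr_right fun hQ => and_congr_right
    fun hQP => ?_
  rw [integral_neg, integral_neg, integral_sub (hZ.integrable_of_absolutelyContinuous hQP)
    (hX.integrable_of_absolutelyContinuous hQP), neg_sub_neg]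

end

/-- Every monetary risk measure admits the representation
`ρ(X) = min_{Z ∈ 𝒜_ρ} sup_{Q ∈ 𝓜₁(P)} (E_Q[−X] − E_Q[−Z])`, the minimum being attained. -/
theorem stmt10 {Ω : Type*} [MeasurableSpace Ω] (P : Measure Ω) [IsProbabilityMeasure P]
    (ρ : (Ω → ℝ) → ℝ)
    (hmono : ∀ X Y : Ω → ℝ, MemLinf P X → MemLinf P Y →
      (∀ᵐ ω ∂P, X ω ≤ Y ω) → ρ Y ≤ ρ X)
    (hTI : ∀ X : Ω → ℝ, MemLinf P X → ∀ m : ℝ, ρ (fun ω => X ω + m) = ρ X - m)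
    (X : Ω → ℝ) (hX : MemLinf P X) :
    IsLeast {r : ℝ | ∃ Z : Ω → ℝ, MemLinf P Z ∧ ρ Z ≤ 0 ∧
        r = sSup {s : ℝ | ∃ Q : Measure Ω, IsProbabilityMeasure Q ∧ Q ≪ P ∧
          s = (∫ ω, -X ω ∂Q) - ∫ ω, -Z ω ∂Q}}
      (ρ X) := by
  constructor
  · have hZ := hX.add_const (ρ X)
    refine ⟨_, hZ, by rw [hTI X hX, sub_self], ?_⟩
    rw [setOf_integral_neg_sub_integral_neg_eq hX hZ]
    simp [acExpectations_const]
  · rintro r ⟨Z, hZ, hρZ, rfl⟩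
    rw [setOf_integral_neg_sub_integral_neg_eq hX hZ]
    set m := sSup (acExpectations P fun ω => Z ω - X ω)
    have hZX : ∀ᵐ ω ∂P, Z ω + -m ≤ X ω := by
      filter_upwards [ae_le_sSup_acExpectations (hZ.sub hX)] with ω hω
      linarith
    have hρX := hmono _ X (hZ.add_const (-m)) hX hZX
    rw [hTI Z hZ] at hρX
    linarith
end

section
/- A monetary risk measure ρ on L^∞(P) is law-invariant (ρ(X) = ρ(Y) whenever X and Y have the same distribution under P) if and only if ρ is FSD-consistent (ρ(X) ≤ ρ(Y) whenever X first-order stochastically dominates Y). -/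
/-!
Law invariance implies FSD-consistency by the quantile coupling: if `X` dominates `Y`, then
`cdf X ≤ cdf Y`, so the quantile functions satisfy `q_Y ≤ q_X`, and with a uniform `U` the
variables `q_X(U)`, `q_Y(U)` have the laws of `X`, `Y` while being ordered pointwise; monotonicity
and law invariance then give `ρ X = ρ (q_X U) ≤ ρ (q_Y U) = ρ Y`. Conversely, equal laws give
FSD in both directions.
-/

open MeasureTheory ProbabilityTheory Filter Set

/-- `X` first-order stochastically dominates `Y`: `E[f(X)] ≥ E[f(Y)]` for every bounded
increasing `f : ℝ → ℝ`. -/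
def FSD {Ω : Type*} [MeasurableSpace Ω] (P : Measure Ω) (X Y : Ω → ℝ) : Prop :=
  ∀ f : ℝ → ℝ, Monotone f → (∃ C : ℝ, ∀ x : ℝ, |f x| ≤ C) →
    ∫ ω, f (Y ω) ∂P ≤ ∫ ω, f (X ω) ∂P

/-- The quantile function of a law supported in `[-C, C]`; clamping to `[-C, C]` (the `insert C`
covers `u ≥ 1`) makes it monotone and bounded on all of `ℝ`, not just on `(0, 1)`. -/
noncomputable def truncQuantile (μ : Measure ℝ) (C u : ℝ) : ℝ :=
  sInf (insert C {x ∈ Icc (-C) C | u ≤ cdf μ x})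

section TruncQuantile

variable {μ ν : Measure ℝ} {C u : ℝ}

lemma bddBelow_truncQuantile_set (hC : 0 ≤ C) :
    BddBelow (insert C {x ∈ Icc (-C) C | u ≤ cdf μ x}) := by
  refine ⟨-C, ?_⟩
  rintro x (rfl | ⟨⟨hx, -⟩, -⟩)
  · linarith
  · exact hx

lemma truncQuantile_mem_Icc (hC : 0 ≤ C) : truncQuantile μ C u ∈ Icc (-C) C := by
  refine ⟨le_csInf (insert_nonempty _ _) ?_,
    csInf_le (bddBelow_truncQuantile_set hC) (mem_insert _ _)⟩
  rintro x (rfl | ⟨⟨hx, -⟩, -⟩)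
  · linarith
  · exact hx

lemma truncQuantile_le_truncQuantile (hC : 0 ≤ C) {v : ℝ} (huv : u ≤ v)
    (hcdf : ∀ x, cdf ν x ≤ cdf μ x) : truncQuantile μ C u ≤ truncQuantile ν C v :=
  csInf_le_csInf (bddBelow_truncQuantile_set hC) (insert_nonempty _ _) <|
    insert_subset_insert fun _ ⟨hx, hvx⟩ ↦ ⟨hx, huv.trans (hvx.trans (hcdf _))⟩

lemma monotone_truncQuantile (hC : 0 ≤ C) : Monotone (truncQuantile μ C) :=
  fun _ _ huv ↦ truncQuantile_le_truncQuantile hC huv fun _ ↦ le_rfl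

lemma le_cdf_truncQuantile (h1 : cdf μ C = 1) (hu1 : u < 1) :
    u ≤ cdf μ (truncQuantile μ C u) := by
  have key : ∀ s ∈ Ioi (truncQuantile μ C u), u ≤ cdf μ s := by
    intro s hs
    obtain ⟨x, hx, hxs⟩ := exists_lt_of_csInf_lt (insert_nonempty _ _) (show sInf _ < s from hs)
    have hux : u ≤ cdf μ x := by
      rcases hx with rfl | ⟨-, h⟩
      · rw [h1]; exact hu1.le
      · exact h
    exact hux.trans (monotone_cdf μ hxs.le)
  exact ge_of_tendsto (((cdf μ).right_continuous _).mono Ioi_subset_Ici_self)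
    (eventually_nhdsWithin_of_forall key)

lemma truncQuantile_le_iff (hC : 0 ≤ C) (h1 : cdf μ C = 1) (h0 : ∀ x < -C, cdf μ x = 0)
    (hu0 : 0 < u) (hu1 : u < 1) {t : ℝ} :
    truncQuantile μ C u ≤ t ↔ u ≤ cdf μ t := by
  refine ⟨fun h ↦ (le_cdf_truncQuantile h1 hu1).trans (monotone_cdf μ h), fun h ↦ ?_⟩
  rcases le_or_gt C t with hCt | htC
  · exact (truncQuantile_mem_Icc hC).2.trans hCt
  · have htC' : -C ≤ t := by
      by_contra! ht
      rw [h0 t ht] at h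
      linarith
    exact csInf_le (bddBelow_truncQuantile_set hC) (mem_insert_of_mem _ ⟨⟨htC', htC.le⟩, h⟩)

lemma cdf_eq_one_of_ae_le [IsProbabilityMeasure μ] (h : ∀ᵐ x ∂μ, x ≤ C) :
    cdf μ C = 1 := by
  rw [cdf_eq_real, measureReal_def,
    (prob_compl_eq_zero_iff measurableSet_Iic).mp (mem_ae_iff.mp h), ENNReal.toReal_one]

lemma cdf_eq_zero_of_ae_le [IsProbabilityMeasure μ] (h : ∀ᵐ x ∂μ, -C ≤ x) {t : ℝ}
    (ht : t < -C) : cdf μ t = 0 := by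
  rw [cdf_eq_real, measureReal_def, measure_mono_null
    (fun x (hx : x ∈ Iic t) ↦ not_le.mpr (mem_Iic.mp hx |>.trans_lt ht)) (ae_iff.mp h),
    ENNReal.toReal_zero]

lemma volume_Iic_inter_Ioo_zero_one {p : ℝ} (hp1 : p ≤ 1) :
    volume (Iic p ∩ Ioo (0 : ℝ) 1) = ENNReal.ofReal p := by
  refine le_antisymm ?_ ?_
  · calc volume (Iic p ∩ Ioo (0 : ℝ) 1) ≤ volume (Ioc 0 p) :=
          measure_mono fun u ⟨hu, hu0, _⟩ ↦ ⟨hu0, hu⟩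
      _ = ENNReal.ofReal p := by rw [Real.volume_Ioc, sub_zero]
  · calc ENNReal.ofReal p = volume (Ioo (0 : ℝ) p) := by rw [Real.volume_Ioo, sub_zero]
      _ ≤ volume (Iic p ∩ Ioo (0 : ℝ) 1) :=
          measure_mono fun u ⟨hu0, hup⟩ ↦ ⟨hup.le, hu0, hup.trans_le hp1⟩

lemma map_truncQuantile_uniform [IsProbabilityMeasure μ] (hC : 0 ≤ C)
    (hμ : ∀ᵐ x ∂μ, |x| ≤ C) :
    (volume.restrict (Ioo (0 : ℝ) 1)).map (truncQuantile μ C) = μ := by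
  have h1 : cdf μ C = 1 := cdf_eq_one_of_ae_le (hμ.mono fun x hx ↦ (abs_le.mp hx).2)
  have h0 : ∀ x < -C, cdf μ x = 0 :=
    fun _ ↦ cdf_eq_zero_of_ae_le (hμ.mono fun x hx ↦ (abs_le.mp hx).1)
  have hmeas := (monotone_truncQuantile (μ := μ) hC).measurable
  refine Measure.ext_of_Iic _ _ fun t ↦ ?_
  have hpre : truncQuantile μ C ⁻¹' Iic t ∩ Ioo 0 1 = Iic (cdf μ t) ∩ Ioo 0 1 := by
    ext u
    simp only [mem_inter_iff, mem_preimage, mem_Iic, mem_Ioo, and_congr_left_iff, and_imp]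
    exact fun hu0 hu1 ↦ truncQuantile_le_iff hC h1 h0 hu0 hu1
  rw [Measure.map_apply hmeas measurableSet_Iic, Measure.restrict_apply' measurableSet_Ioo, hpre,
    volume_Iic_inter_Ioo_zero_one (cdf_le_one μ t), ofReal_cdf]

end TruncQuantile

section Dominance

variable {Ω : Type*} [MeasurableSpace Ω] {P : Measure Ω} {X Y : Ω → ℝ}

lemma fsd_of_map_eq (hX : Measurable X) (hY : Measurable Y) (h : P.map X = P.map Y) :
    FSD P X Y := by
  intro f hf _
  rw [← integral_map hY.aemeasurable hf.measurable.aestronglyMeasurable,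
    ← integral_map hX.aemeasurable hf.measurable.aestronglyMeasurable, h]

lemma integral_indicator_Ioi_comp [IsProbabilityMeasure P] (hX : Measurable X) (t : ℝ) :
    ∫ ω, (Ioi t).indicator 1 (X ω) ∂P = 1 - cdf (P.map X) t := by
  have := Measure.isProbabilityMeasure_map (μ := P) hX.aemeasurable
  rw [← integral_map hX.aemeasurable
      (measurable_one.indicator measurableSet_Ioi).aestronglyMeasurable,
    integral_indicator_one measurableSet_Ioi, cdf_eq_real, ← compl_Iic,
    measureReal_compl measurableSet_Iic, probReal_univ]

/-- Test FSD against the increasing indicator of `(t, ∞)`. -/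
lemma FSD.cdf_le [IsProbabilityMeasure P] (h : FSD P X Y) (hX : Measurable X) (hY : Measurable Y)
    (t : ℝ) : cdf (P.map X) t ≤ cdf (P.map Y) t := by
  have hmono : Monotone ((Ioi t).indicator (1 : ℝ → ℝ)) := by
    intro a b hab
    by_cases ha : a ∈ Ioi t
    · rw [indicator_of_mem ha, indicator_of_mem (mem_Ioi.mpr (ha.trans_le hab))]
      rfl
    · rw [indicator_of_notMem ha]
      exact indicator_nonneg (fun _ _ ↦ zero_le_one) b
  have hbdd : ∃ D : ℝ, ∀ x, |(Ioi t).indicator (1 : ℝ → ℝ) x| ≤ D :=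
    ⟨1, fun x ↦ by by_cases hx : t < x <;> simp [indicator, hx]⟩
  have := h _ hmono hbdd
  rw [integral_indicator_Ioi_comp hX, integral_indicator_Ioi_comp hY] at this
  linarith

lemma MemLinf.exists_common_bound (hX : MemLinf P X) (hY : MemLinf P Y) :
    ∃ C, 0 ≤ C ∧ (∀ᵐ ω ∂P, |X ω| ≤ C) ∧ ∀ᵐ ω ∂P, |Y ω| ≤ C := by
  obtain ⟨-, CX, hCX⟩ := hX
  obtain ⟨-, CY, hCY⟩ := hY
  refine ⟨max (max CX CY) 0, le_max_right _ _, ?_, ?_⟩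
  · exact hCX.mono fun ω h ↦ h.trans ((le_max_left _ _).trans (le_max_left _ _))
  · exact hCY.mono fun ω h ↦ h.trans ((le_max_right _ _).trans (le_max_left _ _))

lemma memLinf_truncQuantile_comp {U : Ω → ℝ} (hU : Measurable U) (μ : Measure ℝ) {C : ℝ}
    (hC : 0 ≤ C) : MemLinf P (truncQuantile μ C ∘ U) :=
  ⟨(monotone_truncQuantile hC).measurable.comp hU, C,
    ae_of_all _ fun _ ↦ abs_le.mpr (truncQuantile_mem_Icc hC)⟩

variable [IsProbabilityMeasure P] {U : Ω → ℝ}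

lemma map_truncQuantile_comp (hU : Measurable U)
    (hUd : P.map U = volume.restrict (Ioo (0 : ℝ) 1)) (hX : Measurable X) {C : ℝ} (hC : 0 ≤ C)
    (hb : ∀ᵐ ω ∂P, |X ω| ≤ C) :
    P.map (truncQuantile (P.map X) C ∘ U) = P.map X := by
  have := Measure.isProbabilityMeasure_map (μ := P) hX.aemeasurable
  rw [← Measure.map_map (monotone_truncQuantile hC).measurable hU, hUd,
    map_truncQuantile_uniform hC ((ae_map_iff hX.aemeasurable
      (measurableSet_le measurable_abs measurable_const)).mpr hb)]

lemma FSD.exists_coupling (h : FSD P X Y) (hU : Measurable U)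
    (hUd : P.map U = volume.restrict (Ioo (0 : ℝ) 1)) (hX : MemLinf P X) (hY : MemLinf P Y) :
    ∃ X' Y', MemLinf P X' ∧ MemLinf P Y' ∧ P.map X' = P.map X ∧ P.map Y' = P.map Y ∧
      ∀ ω, Y' ω ≤ X' ω := by
  obtain ⟨C, hC, hbX, hbY⟩ := hX.exists_common_bound hY
  exact ⟨_, _, memLinf_truncQuantile_comp hU _ hC, memLinf_truncQuantile_comp hU _ hC,
    map_truncQuantile_comp hU hUd hX.1 hC hbX, map_truncQuantile_comp hU hUd hY.1 hC hbY,
    fun _ ↦ truncQuantile_le_truncQuantile hC le_rfl (h.cdf_le hX.1 hY.1)⟩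

end Dominance

theorem stmt12_general {Ω : Type*} [MeasurableSpace Ω] (P : Measure Ω) [IsProbabilityMeasure P]
    (U : Ω → ℝ) (hU : Measurable U)
    (hUd : P.map U = volume.restrict (Ioo (0 : ℝ) 1))
    (ρ : (Ω → ℝ) → ℝ)
    (hmono : ∀ X Y : Ω → ℝ, MemLinf P X → MemLinf P Y →
      (∀ᵐ ω ∂P, X ω ≤ Y ω) → ρ Y ≤ ρ X) :
    (∀ X Y : Ω → ℝ, MemLinf P X → MemLinf P Y → P.map X = P.map Y → ρ X = ρ Y)
    ↔ (∀ X Y : Ω → ℝ, MemLinf P X → MemLinf P Y → FSD P X Y → ρ X ≤ ρ Y) := by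
  constructor
  · intro hlaw X Y hX hY hXY
    obtain ⟨X', Y', hX', hY', hXX', hYY', hle⟩ := hXY.exists_coupling hU hUd hX hY
    calc ρ X = ρ X' := hlaw _ _ hX hX' hXX'.symm
      _ ≤ ρ Y' := hmono _ _ hY' hX' (ae_of_all _ hle)
      _ = ρ Y := (hlaw _ _ hY hY' hYY'.symm).symm
  · intro hfsd X Y hX hY hXY
    exact le_antisymm (hfsd X Y hX hY (fsd_of_map_eq hX.1 hY.1 hXY))
      (hfsd Y X hY hX (fsd_of_map_eq hY.1 hX.1 hXY.symm))

/-- On a nonatomic probability space (one supporting a uniform random variable), a monetary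
risk measure is law-invariant if and only if it is FSD-consistent. -/
theorem stmt12 {Ω : Type*} [MeasurableSpace Ω] (P : Measure Ω) [IsProbabilityMeasure P]
    (U : Ω → ℝ) (hU : Measurable U)
    (hUd : P.map U = volume.restrict (Ioo (0 : ℝ) 1))
    (ρ : (Ω → ℝ) → ℝ)
    (hmono : ∀ X Y : Ω → ℝ, MemLinf P X → MemLinf P Y →
      (∀ᵐ ω ∂P, X ω ≤ Y ω) → ρ Y ≤ ρ X)
    (hTI : ∀ X : Ω → ℝ, MemLinf P X → ∀ m : ℝ, ρ (fun ω => X ω + m) = ρ X - m) :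
    (∀ X Y : Ω → ℝ, MemLinf P X → MemLinf P Y → P.map X = P.map Y → ρ X = ρ Y)
    ↔ (∀ X Y : Ω → ℝ, MemLinf P X → MemLinf P Y → FSD P X Y → ρ X ≤ ρ Y) :=
  stmt12_general P U hU hUd ρ hmono
end

section
/- If X₁, …, Xₙ ∈ L^∞(P) are identically distributed, α₁, …, αₙ ≥ 0 with Σαᵢ = 1, then Σαᵢ Xᵢ second-order stochastically dominates X₁, i.e., E[f(Σαᵢ Xᵢ)] ≥ E[f(X₁)] for every increasing concave f: ℝ → ℝ. -/
open MeasureTheory ProbabilityTheory Filter Set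

/-- If `X₁, …, Xₙ ∈ L^∞(P)` are identically distributed and `αᵢ ≥ 0` with `Σ αᵢ = 1`, then
`Σ αᵢ Xᵢ` second-order stochastically dominates `X₁`:
`E[f(Σ αᵢ Xᵢ)] ≥ E[f(X₁)]` for every increasing concave `f`. -/
theorem stmt15 {Ω : Type*} [MeasurableSpace Ω] (P : Measure Ω) [IsProbabilityMeasure P]
    (n : ℕ) (hn : 0 < n) (X : Fin n → Ω → ℝ) (hX : ∀ i, MemLinf P (X i))
    (hid : ∀ i, P.map (X i) = P.map (X ⟨0, hn⟩))
    (α : Fin n → ℝ) (hα : ∀ i, 0 ≤ α i) (hsum : ∑ i, α i = 1)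
    (f : ℝ → ℝ) (hf : Monotone f) (hconc : ConcaveOn ℝ Set.univ f) :
    ∫ ω, f (X ⟨0, hn⟩ ω) ∂P ≤ ∫ ω, f (∑ i, α i * X i ω) ∂P := by
  have hfm : Measurable f := hf.measurable
  choose C hC using fun i => (hX i).2
  -- integrability of each f ∘ X i
  have hint : ∀ i, Integrable (fun ω => f (X i ω)) P := by
    intro i
    refine (integrable_const (max |f (-(C i))| |f (C i)|)).mono'
      (hfm.comp (hX i).1).aestronglyMeasurable ?_
    filter_upwards [hC i] with ω hω
    rw [Real.norm_eq_abs]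
    exact abs_le_max_abs_abs (hf (abs_le.mp hω).1) (hf (abs_le.mp hω).2)
  -- integrability of f ∘ (∑ αᵢ Xᵢ)
  have hintS : Integrable (fun ω => f (∑ i, α i * X i ω)) P := by
    set D : ℝ := ∑ i, α i * C i with hD
    have hmeas : Measurable fun ω => ∑ i, α i * X i ω :=
      Finset.measurable_sum _ fun i _ => ((hX i).1.const_mul _)
    refine (integrable_const (max |f (-D)| |f D|)).mono'
      (hfm.comp hmeas).aestronglyMeasurable ?_
    have hall : ∀ᵐ ω ∂P, ∀ i, |X i ω| ≤ C i := ae_all_iff.mpr hC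
    filter_upwards [hall] with ω hω
    have hb : |∑ i, α i * X i ω| ≤ D := by
      calc |∑ i, α i * X i ω| ≤ ∑ i, |α i * X i ω| := Finset.abs_sum_le_sum_abs _ _
        _ ≤ ∑ i, α i * C i := by
            refine Finset.sum_le_sum fun i _ => ?_
            rw [abs_mul, abs_of_nonneg (hα i)]
            exact mul_le_mul_of_nonneg_left (hω i) (hα i)
    rw [Real.norm_eq_abs]
    exact abs_le_max_abs_abs (hf (abs_le.mp hb).1) (hf (abs_le.mp hb).2)
  -- pointwise Jensen
  have key : ∀ ω, ∑ i, α i * f (X i ω) ≤ f (∑ i, α i * X i ω) := by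
    intro ω
    simpa using hconc.le_map_sum (fun i _ => hα i) hsum (fun i _ => Set.mem_univ (X i ω))
  -- identical distribution: all integrals equal
  have hid' : ∀ i, ∫ ω, f (X i ω) ∂P = ∫ ω, f (X ⟨0, hn⟩ ω) ∂P := by
    intro i
    rw [← integral_map (hX i).1.aemeasurable hfm.aestronglyMeasurable, hid i,
      integral_map (hX ⟨0, hn⟩).1.aemeasurable hfm.aestronglyMeasurable]
  calc ∫ ω, f (X ⟨0, hn⟩ ω) ∂P
      = ∑ i, α i * ∫ ω, f (X i ω) ∂P := by
        simp_rw [hid', ← Finset.sum_mul, hsum, one_mul]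
    _ = ∫ ω, ∑ i, α i * f (X i ω) ∂P := by
        rw [integral_finset_sum _ fun i _ => (hint i).const_mul _]
        simp_rw [integral_const_mul]
    _ ≤ ∫ ω, f (∑ i, α i * X i ω) ∂P := by
        refine integral_mono (integrable_finset_sum _ fun i _ => (hint i).const_mul _) hintS key
end

section
/- Every SSD-consistent monetary risk measure ρ on L^∞(P) is ID-convex: if X₁, …, Xₙ are identically distributed, αᵢ ≥ 0, Σαᵢ = 1, then ρ(Σαᵢ Xᵢ) ≤ Σαᵢ ρ(Xᵢ). -/
open MeasureTheory ProbabilityTheory Filter Set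

/-- `X` second-order stochastically dominates `Y`: `E[f(X)] ≥ E[f(Y)]` for every
increasing concave `f : ℝ → ℝ`. -/
def SSD {Ω : Type*} [MeasurableSpace Ω] (P : Measure Ω) (X Y : Ω → ℝ) : Prop :=
  ∀ f : ℝ → ℝ, Monotone f → ConcaveOn ℝ Set.univ f →
    ∫ ω, f (Y ω) ∂P ≤ ∫ ω, f (X ω) ∂P

lemma integrable_comp_aux {Ω : Type*} [MeasurableSpace Ω] (P : Measure Ω)
    [IsProbabilityMeasure P] {Z : Ω → ℝ} (hZ : MemLinf P Z) {f : ℝ → ℝ} (hf : Monotone f) :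
    Integrable (fun ω => f (Z ω)) P := by
  obtain ⟨hm, C, hC⟩ := hZ
  refine Integrable.mono' (integrable_const (max |f C| |f (-C)|))
    ((hf.measurable.comp hm).aestronglyMeasurable) ?_
  filter_upwards [hC] with ω hω
  rw [Real.norm_eq_abs, abs_le]
  obtain ⟨h1, h2⟩ := abs_le.mp hω
  constructor
  · calc -(max |f C| |f (-C)|) ≤ -|f (-C)| := by
          simp only [neg_le_neg_iff]; exact le_max_right _ _
      _ ≤ f (-C) := neg_abs_le _
      _ ≤ f (Z ω) := hf h1
  · calc f (Z ω) ≤ f C := hf h2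
      _ ≤ |f C| := le_abs_self _
      _ ≤ _ := le_max_left _ _

/-- Every SSD-consistent monetary risk measure is ID-convex: if `X₁, …, Xₙ` are identically
distributed and `αᵢ ≥ 0`, `Σ αᵢ = 1`, then `ρ(Σ αᵢ Xᵢ) ≤ Σ αᵢ ρ(Xᵢ)`. -/
theorem stmt16 {Ω : Type*} [MeasurableSpace Ω] (P : Measure Ω) [IsProbabilityMeasure P]
    (ρ : (Ω → ℝ) → ℝ)
    (hmono : ∀ X Y : Ω → ℝ, MemLinf P X → MemLinf P Y →
      (∀ᵐ ω ∂P, X ω ≤ Y ω) → ρ Y ≤ ρ X)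
    (hTI : ∀ X : Ω → ℝ, MemLinf P X → ∀ m : ℝ, ρ (fun ω => X ω + m) = ρ X - m)
    (hSSD : ∀ X Y : Ω → ℝ, MemLinf P X → MemLinf P Y → SSD P X Y → ρ X ≤ ρ Y)
    (n : ℕ) (hn : 0 < n) (X : Fin n → Ω → ℝ) (hX : ∀ i, MemLinf P (X i))
    (hid : ∀ i j, P.map (X i) = P.map (X j))
    (α : Fin n → ℝ) (hα : ∀ i, 0 ≤ α i) (hsum : ∑ i, α i = 1) :
    ρ (fun ω => ∑ i, α i * X i ω) ≤ ∑ i, α i * ρ (X i) := by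
  set i₀ : Fin n := ⟨0, hn⟩ with hi₀
  -- integrals of measurable functions of the Xᵢ all agree
  have key : ∀ j, ∀ f : ℝ → ℝ, Measurable f →
      ∫ ω, f (X j ω) ∂P = ∫ ω, f (X i₀ ω) ∂P := by
    intro j f hf
    rw [← integral_map (hX j).1.aemeasurable hf.aestronglyMeasurable, hid j i₀,
      integral_map (hX i₀).1.aemeasurable hf.aestronglyMeasurable]
  set Y : Ω → ℝ := fun ω => ∑ i, α i * X i ω with hYdef
  have hYmem : MemLinf P Y := by
    constructor
    · exact Finset.measurable_sum _ (fun i _ => (measurable_const.mul (hX i).1))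
    · choose C hC using fun i => (hX i).2
      refine ⟨∑ i, α i * C i, ?_⟩
      filter_upwards [MeasureTheory.ae_all_iff.mpr hC] with ω hω
      calc |Y ω| ≤ ∑ i, |α i * X i ω| := Finset.abs_sum_le_sum_abs _ _
        _ ≤ ∑ i, α i * C i := by
            refine Finset.sum_le_sum fun i _ => ?_
            rw [abs_mul, abs_of_nonneg (hα i)]
            exact mul_le_mul_of_nonneg_left (hω i) (hα i)
  have hssd : SSD P Y (X i₀) := by
    intro f hfmono hfconc
    have hmeas := hfmono.measurable
    have hint : ∀ i : Fin n, Integrable (fun ω => α i * f (X i ω)) P :=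
      fun i => (integrable_comp_aux P (hX i) hfmono).const_mul _
    have h1 : ∫ ω, f (X i₀ ω) ∂P = ∑ i, α i * ∫ ω, f (X i ω) ∂P := by
      have : ∀ i : Fin n, α i * ∫ ω, f (X i ω) ∂P = α i * ∫ ω, f (X i₀ ω) ∂P :=
        fun i => by rw [key i f hmeas]
      rw [Finset.sum_congr rfl fun i _ => this i, ← Finset.sum_mul, hsum, one_mul]
    rw [h1]
    calc ∑ i, α i * ∫ ω, f (X i ω) ∂P
        = ∫ ω, ∑ i, α i * f (X i ω) ∂P := by
          rw [integral_finset_sum _ (fun i _ => hint i)]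
          exact Finset.sum_congr rfl fun i _ => (integral_const_mul _ _).symm
      _ ≤ ∫ ω, f (Y ω) ∂P := by
          refine integral_mono (integrable_finset_sum _ (fun i _ => hint i))
            (integrable_comp_aux P hYmem hfmono) fun ω => ?_
          have := hfconc.le_map_sum (t := Finset.univ) (w := α) (p := fun i => X i ω)
            (fun i _ => hα i) hsum (fun i _ => Set.mem_univ _)
          simpa [smul_eq_mul] using this
  have hlaw : ∀ j, ρ (X j) = ρ (X i₀) := by
    intro j
    refine le_antisymm (hSSD _ _ (hX j) (hX i₀) ?_) (hSSD _ _ (hX i₀) (hX j) ?_)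
    · intro f hfm hfc; exact (key j f hfm.measurable).ge
    · intro f hfm hfc; exact (key j f hfm.measurable).le
  have hsum' : ∑ i, α i * ρ (X i) = ρ (X i₀) := by
    rw [Finset.sum_congr rfl fun i _ => by rw [hlaw i], ← Finset.sum_mul, hsum, one_mul]
  rw [hsum']
  exact hSSD Y (X i₀) hYmem (hX i₀) hssd
end
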